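/- Let {H_n} be a Positive Linear Recurrence Sequence with length L and size S. For n > 2L and 0 ≤ t < S, if ω ∈ Ω_{n−ℓ(t)}, then inserting the Type 2 block of size t immediately before the last block of ω yields a legal decomposition in Ω_n whose second-to-last block has size t. -/

import Mathlib

open scoped BigOperators
open Filter

/-- A Positive Linear Recurrence Sequence (PLRS): a sequence `H` of positive integers
satisfying `H (n+1) = c 1 * H n + ⋯ + c L * H (n+1-L)` for `n ≥ L`, with
`H 1 = 1` and initial conditions `H (n+1) = c 1 * H n + ⋯ + c n * H 1 + 1` for `1 ≤ n < L`. -/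
structure PLRS where
  /-- the length of the recurrence -/
  L : ℕ
  /-- the coefficients of the recurrence (indexed from 1) -/
  c : ℕ → ℕ
  /-- the sequence itself (indexed from 1) -/
  H : ℕ → ℕ
  L_pos : 0 < L
  c1_pos : 0 < c 1
  cL_pos : 0 < c L
  H_pos : ∀ n, 1 ≤ n → 0 < H n
  H_one : H 1 = 1
  H_rec : ∀ n, L ≤ n → H (n + 1) = ∑ i ∈ Finset.Icc 1 L, c i * H (n + 1 - i)
  H_init : ∀ n, 1 ≤ n → n < L → H (n + 1) = (∑ i ∈ Finset.Icc 1 n, c i * H (n + 1 - i)) + 1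

namespace PLRS

/-- The size `S = c 1 + ⋯ + c L` of a PLRS. -/
def size (P : PLRS) : ℕ := ∑ i ∈ Finset.Icc 1 P.L, P.c i

/-- Legality of a coefficient sequence `(a_1, …, a_m)` (as a list), not including the
requirement `a_1 > 0`: either (Condition 1) `m < L` and `a_i = c_i` for all `i`, or
(Condition 2) there is `s ∈ {1, …, L}` with `a_1 = c_1, …, a_{s-1} = c_{s-1}`, `a_s < c_s`,
and `(a_{s+1}, …, a_m)` legal (possibly empty). -/
inductive IsLegal (P : PLRS) : List ℕ → Prop
  | cond1 (m : ℕ) (h1 : 1 ≤ m) (h2 : m < P.L) :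
      IsLegal P ((List.range m).map fun i => P.c (i + 1))
  | cond2 (s : ℕ) (hs1 : 1 ≤ s) (hs2 : s ≤ P.L) (a : ℕ) (ha : a < P.c s)
      (rest : List ℕ) (hrest : IsLegal P rest) :
      IsLegal P (((List.range (s - 1)).map fun i => P.c (i + 1)) ++ a :: rest)
  | cond2_last (s : ℕ) (hs1 : 1 ≤ s) (hs2 : s ≤ P.L) (a : ℕ) (ha : a < P.c s) :
      IsLegal P (((List.range (s - 1)).map fun i => P.c (i + 1)) ++ [a])

/-- A legal decomposition: a legal coefficient sequence with `a_1 > 0`. -/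
def LegalDecomp (P : PLRS) (l : List ℕ) : Prop := P.IsLegal l ∧ 0 < l.headI

/-- The value `∑_{i=1}^m a_i H_{m+1-i}` of a coefficient sequence `(a_1, …, a_m)`. -/
def value (P : PLRS) (l : List ℕ) : ℕ :=
  ∑ i ∈ Finset.range l.length, l.getD i 0 * P.H (l.length - i)

/-- `Ω_n`: the set of legal decompositions of integers in `[H_n, H_{n+1})`. -/
def Omega (P : PLRS) (n : ℕ) : Set (List ℕ) :=
  {l | P.LegalDecomp l ∧ P.H n ≤ P.value l ∧ P.value l < P.H (n + 1)}

/-- Expectation of `g` under the uniform probability measure on a (finite) set `A`. -/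
noncomputable def expectOn (A : Set (List ℕ)) (g : List ℕ → ℝ) : ℝ :=
  (∑ᶠ l ∈ A, g l) / (A.ncard : ℝ)

/-- Variance of `g` under the uniform probability measure on a (finite) set `A`. -/
noncomputable def varOn (A : Set (List ℕ)) (g : List ℕ → ℝ) : ℝ :=
  expectOn A (fun l => g l ^ 2) - (expectOn A g) ^ 2

/-- Expectation of `g` under the uniform probability measure on `Ω_n`. -/
noncomputable def expect (P : PLRS) (n : ℕ) (g : List ℕ → ℝ) : ℝ := expectOn (P.Omega n) g

/-- Probability of the event `A` under the uniform probability measure on `Ω_n`. -/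
noncomputable def prob (P : PLRS) (n : ℕ) (A : Set (List ℕ)) : ℝ :=
  ((P.Omega n ∩ A).ncard : ℝ) / ((P.Omega n).ncard : ℝ)

/-- `E[K_n]`, the expected number of summands on `Ω_n`. -/
noncomputable def expectK (P : PLRS) (n : ℕ) : ℝ := P.expect n fun l => (l.sum : ℝ)

/-- `Var[K_n]`, the variance of the number of summands on `Ω_n`. -/
noncomputable def varK (P : PLRS) (n : ℕ) : ℝ := varOn (P.Omega n) fun l => (l.sum : ℝ)

/-- The first index (0-based) at which the coefficient list disagrees with `c`. -/
def firstMismatch (P : PLRS) (l : List ℕ) : Option ℕ :=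
  (List.range l.length).find? fun i => l.getD i 0 != P.c (i + 1)

/-- The block decomposition of a legal coefficient sequence: repeatedly split off the
Type 2 block `(c_1, …, c_{s-1}, a_s)` with `a_s ≠ c_s`; if the whole remaining sequence
agrees with `c` it is a single (Type 1) block. -/
def blocks (P : PLRS) (l : List ℕ) : List (List ℕ) :=
  if h : l = [] then []
  else
    match P.firstMismatch l with
    | none => [l]
    | some i => l.take (i + 1) :: P.blocks (l.drop (i + 1))
termination_by l.length
decreasing_by
  have hl : 0 < l.length := List.length_pos_iff.mpr h
  simp only [List.length_drop]
  omega

/-- The second-to-last block of a legal decomposition. -/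
def stlBlock (P : PLRS) (l : List ℕ) : List ℕ := ((P.blocks l).reverse).getD 1 []

/-- `Z_n(ω)`: the size (sum of coefficients) of the second-to-last block. -/
def Z (P : PLRS) (l : List ℕ) : ℕ := (P.stlBlock l).sum

/-- The length function `ℓ(t)`: the length of the Type 2 block of size `t`, i.e., the least
`s` with `t < c_1 + ⋯ + c_s`. -/
noncomputable def ell (P : PLRS) (t : ℕ) : ℕ :=
  sInf {s : ℕ | t < ∑ i ∈ Finset.Icc 1 s, P.c i}

/-- `L_n(ω) = ℓ(Z_n(ω))`: the length of the second-to-last block. -/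
noncomputable def Lfn (P : PLRS) (l : List ℕ) : ℕ := P.ell (P.Z l)

/-- `h_t`: remove the second-to-last block of a legal decomposition. -/
def removeSTL (P : PLRS) (l : List ℕ) : List ℕ :=
  ((((P.blocks l).reverse).eraseIdx 1).reverse).flatten

/-- The Type 2 block of size `t`: `(c_1, …, c_{ℓ(t)-1}, t - (c_1 + ⋯ + c_{ℓ(t)-1}))`. -/
noncomputable def type2Block (P : PLRS) (t : ℕ) : List ℕ :=
  ((List.range (P.ell t - 1)).map fun i => P.c (i + 1)) ++
    [t - ∑ i ∈ Finset.Icc 1 (P.ell t - 1), P.c i]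

/-- Insert the Type 2 block of size `t` immediately before the last block. -/
noncomputable def insertSTL (P : PLRS) (t : ℕ) (l : List ℕ) : List ℕ :=
  ((((P.blocks l).reverse).insertIdx 1 (P.type2Block t)).reverse).flatten

/-- A Type 1 block: `(c_1, …, c_m)` with `1 ≤ m < L`. -/
def IsType1Block (P : PLRS) (bl : List ℕ) : Prop :=
  ∃ m, 1 ≤ m ∧ m < P.L ∧ bl = (List.range m).map fun i => P.c (i + 1)

/-- A Type 2 block: `(c_1, …, c_{s-1}, a)` with `1 ≤ s ≤ L` and `a < c_s`. -/
def IsType2Block (P : PLRS) (bl : List ℕ) : Prop :=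
  ∃ s, 1 ≤ s ∧ s ≤ P.L ∧ ∃ a, a < P.c s ∧
    bl = ((List.range (s - 1)).map fun i => P.c (i + 1)) ++ [a]

/-- Conditional expectation of `g` on `Ω_n` given `Z_n = t`. -/
noncomputable def condExpect (P : PLRS) (n t : ℕ) (g : List ℕ → ℝ) : ℝ :=
  expectOn (P.Omega n ∩ {l | P.Z l = t}) g

end PLRS

open PLRS

/-!
A legal decomposition is a concatenation of Type 2 blocks followed by one last block of
either type, and the block decomposition recovers exactly this factorisation. Inserting a
Type 2 block before the last block therefore produces a legal decomposition whose
second-to-last block is the inserted one, and whose length grows by `ℓ(t)`. Since the value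
of a legal decomposition `(a_1, …, a_m)` with `a_1 > 0` lies in `[H_m, H_{m+1})`, membership
in `Ω_m` only depends on the length, so the new decomposition lies in `Ω_n`. The hypothesis
`n > 2L` makes `ω` longer than its last block, so the inserted block is not the first block
and the leading coefficient stays positive.
-/

lemma List.sum_map_range_eq_sum_range {M : Type*} [AddCommMonoid M] (f : ℕ → M) (k : ℕ) :
    ((List.range k).map f).sum = ∑ i ∈ Finset.range k, f i := by
  rw [Finset.sum_eq_multiset_sum]
  rfl

lemma Finset.sum_Icc_one_eq_sum_range {M : Type*} [AddCommMonoid M] (f : ℕ → M) (k : ℕ) :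
    ∑ i ∈ Finset.Icc 1 k, f i = ∑ i ∈ Finset.range k, f (i + 1) := by
  rw [Finset.range_eq_Ico, Finset.sum_Ico_add' f 0 k 1]
  rfl

lemma List.headI_append_of_ne_nil {α : Type*} [Inhabited α] {x : List α} (hx : x ≠ [])
    (y : List α) : (x ++ y).headI = x.headI := by
  obtain ⟨a, x, rfl⟩ := List.exists_cons_of_ne_nil hx
  rfl

namespace PLRS

variable (P : PLRS)

lemma sum_Icc_mul_H_le {s m : ℕ} (hs : s ≤ P.L) (hsm : s ≤ m) (hm : 1 ≤ m) :
    ∑ i ∈ Finset.Icc 1 s, P.c i * P.H (m + 1 - i) ≤ P.H (m + 1) := by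
  rcases le_or_gt P.L m with hLm | hmL
  · rw [P.H_rec m hLm]
    exact Finset.sum_le_sum_of_subset (Finset.Icc_subset_Icc_right hs)
  · rw [P.H_init m hm hmL]
    exact (Finset.sum_le_sum_of_subset (Finset.Icc_subset_Icc_right hsm)).trans
      (Nat.le_succ _)

lemma H_le_H_succ {n : ℕ} (hn : 1 ≤ n) : P.H n ≤ P.H (n + 1) :=
  calc P.H n ≤ P.c 1 * P.H n := Nat.le_mul_of_pos_left _ P.c1_pos
    _ = ∑ i ∈ Finset.Icc 1 1, P.c i * P.H (n + 1 - i) := by simp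
    _ ≤ P.H (n + 1) := P.sum_Icc_mul_H_le P.L_pos hn hn

lemma H_mono {m n : ℕ} (hm : 1 ≤ m) (hmn : m ≤ n) : P.H m ≤ P.H n := by
  induction n, hmn using Nat.le_induction with
  | base => rfl
  | succ k hmk ih => exact ih.trans (P.H_le_H_succ (hm.trans hmk))

@[simp] lemma value_nil : P.value [] = 0 := by simp [value]

lemma value_cons (a : ℕ) (l : List ℕ) :
    P.value (a :: l) = a * P.H (l.length + 1) + P.value l := by
  simp only [value, List.length_cons]
  rw [Finset.sum_range_succ' (fun i => (a :: l).getD i 0 * P.H (l.length + 1 - i))]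
  simp [add_comm]

lemma value_append (x y : List ℕ) :
    P.value (x ++ y) =
      ∑ i ∈ Finset.range x.length, x.getD i 0 * P.H (x.length + y.length - i) + P.value y := by
  induction x with
  | nil => simp
  | cons a xs ih =>
    rw [List.cons_append, value_cons, ih, List.length_cons, List.length_append,
      Finset.sum_range_succ']
    have hshift : ∀ i, xs.length + 1 + y.length - (i + 1) = xs.length + y.length - i := by
      omega
    simp only [List.getD_cons_succ, List.getD_cons_zero, hshift, Nat.sub_zero]
    ring_nf

lemma value_prefix_append (k : ℕ) (y : List ℕ) :
    P.value (((List.range k).map fun i => P.c (i + 1)) ++ y) =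
      ∑ i ∈ Finset.Icc 1 k, P.c i * P.H (k + y.length + 1 - i) + P.value y := by
  rw [value_append, Finset.sum_Icc_one_eq_sum_range]
  simp only [List.length_map, List.length_range]
  congr 1
  refine Finset.sum_congr rfl fun i hi => ?_
  have hik : i < k := Finset.mem_range.mp hi
  rw [List.getD_eq_getElem?_getD, List.getElem?_map, List.getElem?_range hik]
  simp only [Option.map_some, Option.getD_some]
  congr 2
  omega

/-- Raising `a < c_{k+1}` to `c_{k+1}` and the tail to `H_{r+1} > value rest` leaves the
recurrence for `H_{k+r+2}`. -/
lemma value_prefix_cons_lt {k a : ℕ} {rest : List ℕ} (hk : k + 1 ≤ P.L) (ha : a < P.c (k + 1))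
    (hrest : P.value rest < P.H (rest.length + 1)) :
    P.value (((List.range k).map fun i => P.c (i + 1)) ++ a :: rest) <
      P.H (k + rest.length + 2) := by
  have htail : a * P.H (rest.length + 1) + P.value rest < P.c (k + 1) * P.H (rest.length + 1) :=
    calc a * P.H (rest.length + 1) + P.value rest < (a + 1) * P.H (rest.length + 1) := by
          linarith
      _ ≤ P.c (k + 1) * P.H (rest.length + 1) := Nat.mul_le_mul_right _ ha
  have hrec := P.sum_Icc_mul_H_le (m := k + rest.length + 1) hk (by omega) (by omega)
  rw [Finset.sum_Icc_succ_top (by omega),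
    show k + rest.length + 1 + 1 - (k + 1) = rest.length + 1 by omega,
    show k + rest.length + 1 + 1 = k + rest.length + 2 from rfl] at hrec
  rw [value_prefix_append, value_cons, List.length_cons,
    show k + (rest.length + 1) + 1 = k + rest.length + 2 by omega]
  omega

theorem value_lt_of_isLegal {l : List ℕ} (h : P.IsLegal l) : P.value l < P.H (l.length + 1) := by
  induction h with
  | cond1 m h1 h2 =>
    have hval := P.value_prefix_append m []
    rw [List.append_nil, List.length_nil, value_nil, add_zero, add_zero] at hval
    rw [hval, List.length_map, List.length_range, P.H_init m h1 h2]
    exact Nat.lt_succ_self _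
  | cond2 s hs1 hs2 a ha rest _ ih =>
    obtain ⟨k, rfl⟩ : ∃ k, s = k + 1 := ⟨s - 1, by omega⟩
    simpa [Nat.add_assoc] using P.value_prefix_cons_lt hs2 ha ih
  | cond2_last s hs1 hs2 a ha =>
    obtain ⟨k, rfl⟩ : ∃ k, s = k + 1 := ⟨s - 1, by omega⟩
    have hnil : P.value [] < P.H (([] : List ℕ).length + 1) := by simp [P.H_one]
    simpa [Nat.add_assoc] using P.value_prefix_cons_lt hs2 ha hnil

lemma H_length_le_value {l : List ℕ} (hl : 0 < l.headI) : P.H l.length ≤ P.value l := by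
  cases l with
  | nil => simp at hl
  | cons a rest =>
    rw [value_cons, List.length_cons]
    exact (Nat.le_mul_of_pos_left _ hl).trans (Nat.le_add_right _ _)

theorem mem_Omega_iff {n : ℕ} (hn : 1 ≤ n) {l : List ℕ} :
    l ∈ P.Omega n ↔ P.LegalDecomp l ∧ l.length = n := by
  constructor
  · rintro ⟨⟨hleg, hhead⟩, hlo, hhi⟩
    refine ⟨⟨hleg, hhead⟩, ?_⟩
    have hge := P.H_length_le_value hhead
    have hlt := P.value_lt_of_isLegal hleg
    have hlen : 1 ≤ l.length := by
      cases l with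
      | nil => simp at hhead
      | cons => simp
    by_contra hne
    rcases Nat.lt_or_gt_of_ne hne with h | h
    · have := P.H_mono (by omega) (show l.length + 1 ≤ n by omega)
      omega
    · have := P.H_mono (by omega) (show n + 1 ≤ l.length by omega)
      omega
  · rintro ⟨hl, rfl⟩
    exact ⟨hl, P.H_length_le_value hl.2, P.value_lt_of_isLegal hl.1⟩

@[simp] lemma blocks_nil : P.blocks [] = [] := by
  rw [blocks, dif_pos rfl]

lemma firstMismatch_type2_append {s a : ℕ} (r : List ℕ) (hs : 1 ≤ s) (ha : a ≠ P.c s) :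
    P.firstMismatch (((List.range (s - 1)).map fun i => P.c (i + 1)) ++ [a] ++ r) =
      some (s - 1) := by
  refine List.find?_eq_some_iff_getElem.mpr ⟨?_, s - 1, by simp, List.getElem_range _, ?_⟩
  · rw [List.getD_eq_getElem?_getD, List.append_assoc, List.getElem?_append_right (by simp)]
    simpa [show s - 1 + 1 = s by omega] using ha
  · intro j hj
    simp only [List.getElem_range]
    rw [List.getD_eq_getElem?_getD, List.append_assoc,
      List.getElem?_append_left (by simpa using hj)]
    simp [List.getElem?_range hj]

lemma blocks_type2_append {b : List ℕ} (hb : P.IsType2Block b) (r : List ℕ) :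
    P.blocks (b ++ r) = b :: P.blocks r := by
  obtain ⟨s, hs1, -, a, ha, rfl⟩ := hb
  have hlen : (((List.range (s - 1)).map fun i => P.c (i + 1)) ++ [a]).length = s - 1 + 1 := by
    simp
  rw [blocks, dif_neg (by simp), P.firstMismatch_type2_append r hs1 ha.ne]
  simp only [List.take_left' hlen, List.drop_left' hlen]

lemma blocks_type1 {d : List ℕ} (hd : P.IsType1Block d) : P.blocks d = [d] := by
  obtain ⟨m, hm1, -, rfl⟩ := hd
  have hfm : P.firstMismatch ((List.range m).map fun i => P.c (i + 1)) = none := by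
    refine List.find?_eq_none.mpr fun i hi => ?_
    simp only [List.length_map, List.length_range, List.mem_range] at hi
    simp [List.getD_eq_getElem?_getD, List.getElem?_range hi]
  rw [blocks, dif_neg (by simp; omega), hfm]

lemma blocks_type2 {d : List ℕ} (hd : P.IsType2Block d) : P.blocks d = [d] := by
  simpa using P.blocks_type2_append hd []

theorem blocks_flatten_append {bs : List (List ℕ)} {d : List ℕ}
    (hbs : ∀ b ∈ bs, P.IsType2Block b) (hd : P.IsType1Block d ∨ P.IsType2Block d) :
    P.blocks (bs.flatten ++ d) = bs ++ [d] := by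
  induction bs with
  | nil => rcases hd with hd | hd <;> simp [P.blocks_type1, P.blocks_type2, hd]
  | cons b bs ih =>
    rw [List.flatten_cons, List.append_assoc, P.blocks_type2_append (hbs b (by simp)),
      ih fun x hx => hbs x (by simp [hx]), List.cons_append]

theorem isLegal_iff {l : List ℕ} :
    P.IsLegal l ↔ ∃ (bs : List (List ℕ)) (d : List ℕ), (∀ b ∈ bs, P.IsType2Block b) ∧
      (P.IsType1Block d ∨ P.IsType2Block d) ∧ l = bs.flatten ++ d := by
  constructor
  · intro h
    induction h with
    | cond1 m h1 h2 => exact ⟨[], _, by simp, Or.inl ⟨m, h1, h2, rfl⟩, by simp⟩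
    | cond2_last s hs1 hs2 a ha =>
      exact ⟨[], _, by simp, Or.inr ⟨s, hs1, hs2, a, ha, rfl⟩, by simp⟩
    | cond2 s hs1 hs2 a ha rest _ ih =>
      obtain ⟨bs, d, hbs, hd, rfl⟩ := ih
      refine ⟨(((List.range (s - 1)).map fun i => P.c (i + 1)) ++ [a]) :: bs, d, ?_, hd,
        by simp⟩
      rintro b (_ | ⟨_, hb⟩)
      exacts [⟨s, hs1, hs2, a, ha, rfl⟩, hbs b hb]
  · rintro ⟨bs, d, hbs, hd, rfl⟩
    induction bs with
    | nil =>
      rcases hd with ⟨m, hm1, hm2, rfl⟩ | ⟨s, hs1, hs2, a, ha, rfl⟩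
      exacts [IsLegal.cond1 m hm1 hm2, IsLegal.cond2_last s hs1 hs2 a ha]
    | cons b bs ih =>
      obtain ⟨s, hs1, hs2, a, ha, rfl⟩ := hbs b (by simp)
      simpa using IsLegal.cond2 s hs1 hs2 a ha _ (ih fun x hx => hbs x (by simp [hx]))

lemma length_le_of_lastBlock {d : List ℕ} (hd : P.IsType1Block d ∨ P.IsType2Block d) :
    d.length ≤ P.L := by
  rcases hd with ⟨m, -, hm, rfl⟩ | ⟨s, hs1, hs, a, -, rfl⟩ <;> simp <;> omega

section Insertion

variable {P}

lemma ell_spec {t : ℕ} (ht : t < P.size) :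
    1 ≤ P.ell t ∧ P.ell t ≤ P.L ∧ ∑ i ∈ Finset.Icc 1 (P.ell t - 1), P.c i ≤ t ∧
      t < ∑ i ∈ Finset.Icc 1 (P.ell t - 1), P.c i + P.c (P.ell t) := by
  have hL : P.L ∈ {s : ℕ | t < ∑ i ∈ Finset.Icc 1 s, P.c i} := ht
  have hmem : t < ∑ i ∈ Finset.Icc 1 (P.ell t), P.c i := Nat.sInf_mem ⟨P.L, hL⟩
  have hpos : 1 ≤ P.ell t := by
    by_contra h0
    simp [show P.ell t = 0 by omega] at hmem
  have hpred : ¬ t < ∑ i ∈ Finset.Icc 1 (P.ell t - 1), P.c i :=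
    Nat.notMem_of_lt_sInf (s := {s : ℕ | t < ∑ i ∈ Finset.Icc 1 s, P.c i})
      (Nat.sub_lt hpos one_pos)
  rw [← Nat.sub_add_cancel hpos, Finset.sum_Icc_succ_top (by omega)] at hmem
  exact ⟨hpos, Nat.sInf_le hL, Nat.le_of_not_lt hpred, by rwa [Nat.sub_add_cancel hpos] at hmem⟩

lemma isType2Block_type2Block {t : ℕ} (ht : t < P.size) : P.IsType2Block (P.type2Block t) := by
  obtain ⟨hpos, hle, hpre, hlt⟩ := ell_spec ht
  exact ⟨P.ell t, hpos, hle, _, by omega, rfl⟩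

lemma length_type2Block {t : ℕ} (ht : t < P.size) : (P.type2Block t).length = P.ell t := by
  simp [type2Block, Nat.sub_add_cancel (ell_spec ht).1]

lemma sum_type2Block {t : ℕ} (ht : t < P.size) : (P.type2Block t).sum = t := by
  obtain ⟨-, -, hpre, -⟩ := ell_spec ht
  rw [type2Block, List.sum_append, List.sum_singleton, List.sum_map_range_eq_sum_range,
    ← Finset.sum_Icc_one_eq_sum_range]
  omega

lemma insertSTL_eq_of_blocks_eq {l : List ℕ} {bs : List (List ℕ)} {d : List ℕ}
    (h : P.blocks l = bs ++ [d]) (t : ℕ) :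
    P.insertSTL t l = bs.flatten ++ P.type2Block t ++ d := by
  simp [insertSTL, h]

lemma Z_flatten_append {bs : List (List ℕ)} {b d : List ℕ}
    (hbs : ∀ x ∈ bs, P.IsType2Block x) (hb : P.IsType2Block b)
    (hd : P.IsType1Block d ∨ P.IsType2Block d) :
    P.Z (bs.flatten ++ b ++ d) = b.sum := by
  have hbsb : ∀ x ∈ bs ++ [b], P.IsType2Block x := by
    simpa [or_imp, forall_and] using ⟨hbs, hb⟩
  have := P.blocks_flatten_append hbsb hd
  simp only [List.flatten_append, List.flatten_cons, List.flatten_nil, List.append_nil] at this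
  rw [Z, stlBlock, this]
  simp

end Insertion

end PLRS

/-- For `n > 2L`, `0 ≤ t < S` and `ω ∈ Ω_{n-ℓ(t)}`, inserting the Type 2
block of size `t` immediately before the last block of `ω` yields a legal decomposition in
`Ω_n` whose second-to-last block has size `t`. -/
theorem insertSTL_mem (P : PLRS) (n t : ℕ) (hn : 2 * P.L < n) (ht : t < P.size)
    (l : List ℕ) (hl : l ∈ P.Omega (n - P.ell t)) :
    P.insertSTL t l ∈ P.Omega n ∧ P.Z (P.insertSTL t l) = t := by
  obtain ⟨-, hell, -⟩ := ell_spec ht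
  obtain ⟨⟨hleg, hhead⟩, hlen⟩ := (P.mem_Omega_iff (by omega)).mp hl
  obtain ⟨bs, d, hbs, hd, rfl⟩ := P.isLegal_iff.mp hleg
  have hT := isType2Block_type2Block ht
  rw [insertSTL_eq_of_blocks_eq (P.blocks_flatten_append hbs hd)]
  have hbs_ne : bs.flatten ≠ [] := by
    rintro hnil
    have := P.length_le_of_lastBlock hd
    simp only [hnil, List.nil_append] at hlen
    omega
  refine ⟨(P.mem_Omega_iff (by omega)).mpr ⟨⟨?_, ?_⟩, ?_⟩, ?_⟩
  · refine P.isLegal_iff.mpr ⟨bs ++ [P.type2Block t], d, ?_, hd, by simp⟩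
    simpa [or_imp, forall_and] using ⟨hbs, hT⟩
  · rwa [List.append_assoc, List.headI_append_of_ne_nil hbs_ne,
      ← List.headI_append_of_ne_nil hbs_ne d]
  · simp only [List.length_append] at hlen ⊢
    rw [length_type2Block ht]
    omega
  · rw [Z_flatten_append hbs hT hd, sum_type2Block ht]
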